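/- arXiv:2501.02087 — 4 statements merged into one kernel-verified Lean document; each statement's English description precedes it below -/
import Mathlib

section
/- If μ is a probability measure on [0,1] and φ(u) = ∫_{(u,1]} (1/α) μ(dα), then φ is non-increasing, left-continuous off a null set, ∫₀¹ φ(u) du = 1, and ∫₀¹ F_Z^{-1}(u) φ(u) du = ∫₀¹ CVaR_α(Z) μ(dα) for any integrable random variable Z, where CVaR_α(Z) = (1/α)∫₀^α F_Z^{-1}(u) du. -/
/-!
Write `φ u = ∫ 𝟙{u < α} α⁻¹ dμ(α)`. Both identities are Fubini's theorem for the kernel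
`(u, α) ↦ 𝟙{u < α} f u α⁻¹` on `(0,1]²`, which is integrable for `volume ⊗ μ` as soon as `f` is
Lebesgue integrable and `α⁻¹` is `μ`-integrable: integrating in `u` first gives
`α⁻¹ ∫₀^α f`, so `f = 1` yields `∫ φ = μ (0,1] = 1` and `f = F_Z⁻¹` yields the mixture of CVaRs.
The quantile function is Lebesgue integrable on `(0,1)` because it pushes Lebesgue measure forward
to the law of `Z`, by the Galois connection `F⁻¹ u ≤ z ↔ u ≤ F z` (right continuity of `F`).
Finally, `φ` is antitone, hence continuous outside a countable set.
-/

open MeasureTheory Set Filter ProbabilityTheory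

namespace ProbabilityTheory

/-- Only meaningful for `u ∈ (0, 1)`; elsewhere `sInf` returns a junk value. -/
noncomputable def quantile (ν : Measure ℝ) (u : ℝ) : ℝ := sInf {z | u ≤ cdf ν z}

variable {ν : Measure ℝ} {u : ℝ}

lemma bddBelow_setOf_le_cdf (hu : 0 < u) : BddBelow {z | u ≤ cdf ν z} := by
  obtain ⟨z₀, hz₀⟩ := ((tendsto_cdf_atBot ν).eventually (eventually_lt_nhds hu)).exists
  exact ⟨z₀, fun z hz => le_of_not_gt fun hlt => (hz.trans (monotone_cdf ν hlt.le)).not_gt hz₀⟩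

lemma nonempty_setOf_le_cdf (hu : u < 1) : {z | u ≤ cdf ν z}.Nonempty :=
  ((tendsto_cdf_atTop ν).eventually (eventually_gt_nhds hu)).exists.imp fun _ h => h.le

lemma le_cdf_quantile (hu : u ∈ Ioo 0 1) : u ≤ cdf ν (quantile ν u) := by
  have hright : ∀ y > quantile ν u, u ≤ cdf ν y := fun y hy =>
    let ⟨z, hz, hzy⟩ := exists_lt_of_csInf_lt (nonempty_setOf_le_cdf hu.2) hy
    hz.trans (monotone_cdf ν hzy.le)
  exact ge_of_tendsto (((cdf ν).right_continuous _).mono Ioi_subset_Ici_self)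
    (eventually_nhdsWithin_of_forall hright)

lemma quantile_le_iff (hu : u ∈ Ioo 0 1) {z : ℝ} : quantile ν u ≤ z ↔ u ≤ cdf ν z :=
  ⟨fun h => (le_cdf_quantile hu).trans (monotone_cdf ν h),
    fun h => csInf_le (bddBelow_setOf_le_cdf hu.1) h⟩

lemma monotoneOn_quantile : MonotoneOn (quantile ν) (Ioo 0 1) := fun _ hu _ hv huv =>
  (quantile_le_iff hu).2 (huv.trans (le_cdf_quantile hv))

lemma aemeasurable_quantile : AEMeasurable (quantile ν) (volume.restrict (Ioo 0 1)) :=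
  aemeasurable_restrict_of_monotoneOn measurableSet_Ioo monotoneOn_quantile

variable [IsProbabilityMeasure ν]

lemma map_quantile_restrict_Ioo : (volume.restrict (Ioo 0 1)).map (quantile ν) = ν := by
  have : IsFiniteMeasure (volume.restrict (Ioo (0 : ℝ) 1)) := by
    rw [isFiniteMeasure_restrict]; simp
  refine Measure.ext_of_Iic _ _ fun z => ?_
  have hpre : quantile ν ⁻¹' Iic z ∩ Ioo 0 1 = Iic (cdf ν z) ∩ Ioo 0 1 := by
    ext u
    simp only [mem_inter_iff, mem_preimage, mem_Iic, and_congr_left_iff]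
    exact fun hu => quantile_le_iff hu
  rw [Measure.map_apply_of_aemeasurable aemeasurable_quantile measurableSet_Iic,
    Measure.restrict_apply' measurableSet_Ioo, hpre, ← ofReal_cdf, inter_comm,
    measure_congr (Ioo_ae_eq_Ioc.inter (ae_eq_refl (Iic (cdf ν z)))), Ioc_inter_Iic,
    inf_eq_right.2 (cdf_le_one ν z), Real.volume_Ioc, sub_zero]

lemma integrableOn_quantile (h : Integrable id ν) : IntegrableOn (quantile ν) (Ioo 0 1) := by
  rw [← map_quantile_restrict_Ioo (ν := ν)] at h
  exact (integrable_map_measure aestronglyMeasurable_id aemeasurable_quantile).1 h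

end ProbabilityTheory

lemma Antitone.ae_continuousAt {f : ℝ → ℝ} (hf : Antitone f) (μ : Measure ℝ)
    [NullSingletonClass μ] : ∀ᵐ x ∂μ, ContinuousAt f x :=
  ae_iff.2 (hf.countable_not_continuousAt.measure_zero μ)

lemma antitone_setIntegral_Ioc {μ : Measure ℝ} {f : ℝ → ℝ} (hf : Integrable f μ)
    (hf₀ : 0 ≤ᵐ[μ] f) (b : ℝ) : Antitone fun u => ∫ α in Ioc u b, f α ∂μ := fun _ _ huv =>
  setIntegral_mono_set hf.integrableOn (ae_restrict_of_ae hf₀)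
    (Ioc_subset_Ioc_left huv).eventuallyLE

lemma setIntegral_mul_setIntegral_Ioc_inv {μ : Measure ℝ} [SFinite μ] {f : ℝ → ℝ}
    (hf : IntegrableOn f (Ioc 0 1)) (hinv : IntegrableOn (·⁻¹) (Ioc 0 1) μ) :
    ∫ u in Ioc 0 1, f u * ∫ α in Ioc u 1, α⁻¹ ∂μ
      = ∫ α in Ioc 0 1, α⁻¹ * (∫ u in Ioc 0 α, f u) ∂μ := by
  set F : ℝ → ℝ → ℝ := fun u α =>
    {p : ℝ × ℝ | p.1 < p.2}.indicator (fun p => f p.1 * p.2⁻¹) (u, α)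
  have hF : Integrable (Function.uncurry F)
      ((volume.restrict (Ioc 0 1)).prod (μ.restrict (Ioc 0 1))) :=
    (hf.mul_prod hinv).indicator (measurableSet_lt measurable_fst measurable_snd)
  have hF_u : ∀ u α, F u α = (Ioi u).indicator (fun α => f u * α⁻¹) α := fun u α => by
    simp [F, indicator_apply]
  have hF_α : ∀ u α, F u α = (Iio α).indicator (fun u => f u * α⁻¹) u := fun u α => by
    simp [F, indicator_apply]
  calc ∫ u in Ioc 0 1, f u * ∫ α in Ioc u 1, α⁻¹ ∂μ
      = ∫ u in Ioc 0 1, (∫ α in Ioc 0 1, F u α ∂μ) := by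
        refine setIntegral_congr_fun measurableSet_Ioc fun u hu => ?_
        simp_rw [hF_u, setIntegral_indicator measurableSet_Ioi, Ioc_inter_Ioi,
          sup_eq_right.2 hu.1.le, integral_const_mul]
    _ = ∫ α in Ioc 0 1, (∫ u in Ioc 0 1, F u α) ∂μ := integral_integral_swap hF
    _ = ∫ α in Ioc 0 1, α⁻¹ * (∫ u in Ioc 0 α, f u) ∂μ := by
        refine setIntegral_congr_fun measurableSet_Ioc fun α hα => ?_
        have hIoo : Ioc 0 1 ∩ Iio α = Ioo 0 α := by
          ext u
          simp only [mem_inter_iff, mem_Ioc, mem_Iio, mem_Ioo]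
          exact ⟨fun h => ⟨h.1.1, h.2⟩, fun h => ⟨⟨h.1, h.2.le.trans hα.2⟩, h.2⟩⟩
        simp_rw [hF_α, setIntegral_indicator measurableSet_Iio, hIoo, integral_mul_const,
          setIntegral_congr_set Ioo_ae_eq_Ioc, mul_comm]

lemma setIntegral_setIntegral_Ioc_inv {μ : Measure ℝ} [SFinite μ]
    (hinv : IntegrableOn (·⁻¹) (Ioc 0 1) μ) :
    ∫ u in Ioc 0 1, ∫ α in Ioc u 1, α⁻¹ ∂μ = μ.real (Ioc 0 1) := by
  have h := setIntegral_mul_setIntegral_Ioc_inv (f := fun _ => 1)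
    (integrableOn_const (by simp)) hinv
  simp only [one_mul] at h
  rw [h, ← mul_one (μ.real _), ← smul_eq_mul, ← setIntegral_const]
  refine setIntegral_congr_fun measurableSet_Ioc fun α hα => ?_
  simp [Real.volume_real_Ioc_of_le hα.1.le, inv_mul_cancel₀ hα.1.ne']

theorem stmt1_general {Ω : Type*} [MeasurableSpace Ω] (P : Measure Ω) [IsProbabilityMeasure P]
    (Z : Ω → ℝ) (hZ : Integrable Z P)
    (μ : Measure ℝ) [IsProbabilityMeasure μ] (hsupp : μ (Set.Ioc (0:ℝ) 1)ᶜ = 0)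
    (hint : IntegrableOn (fun α : ℝ => α⁻¹) (Set.Ioc (0:ℝ) 1) μ)
    (φ : ℝ → ℝ) (hφ : ∀ u, φ u = ∫ α in Set.Ioc u 1, α⁻¹ ∂μ)
    (q : ℝ → ℝ) (hq : ∀ u, q u = sInf {z | u ≤ (P {ω | Z ω ≤ z}).toReal})
    (cvar : ℝ → ℝ) (hcvar : ∀ α, cvar α = α⁻¹ * ∫ u in Set.Ioc (0:ℝ) α, q u) :
    Antitone φ
    ∧ (∀ᵐ u ∂(volume.restrict (Set.Ioc (0:ℝ) 1)), ContinuousWithinAt φ (Set.Iio u) u)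
    ∧ (∫ u in Set.Ioc (0:ℝ) 1, φ u) = 1
    ∧ (∫ u in Set.Ioc (0:ℝ) 1, q u * φ u) = ∫ α in Set.Ioc (0:ℝ) 1, cvar α ∂μ := by
  obtain rfl : φ = fun u => ∫ α in Ioc u 1, α⁻¹ ∂μ := funext hφ
  obtain rfl : cvar = fun α => α⁻¹ * ∫ u in Ioc 0 α, q u := funext hcvar
  have : IsProbabilityMeasure (P.map Z) := Measure.isProbabilityMeasure_map hZ.aemeasurable
  have hq_eq : q = quantile (P.map Z) := funext fun u => by
    simp only [hq, quantile, cdf_eq_real, measureReal_def,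
      Measure.map_apply_of_aemeasurable hZ.aemeasurable measurableSet_Iic]
    rfl
  have hμ_supp : ∀ᵐ α ∂μ, α ∈ Ioc (0 : ℝ) 1 := ae_iff.2 hsupp
  have hinv : Integrable (·⁻¹) μ := by
    rwa [IntegrableOn, Measure.restrict_eq_self_of_ae_mem hμ_supp] at hint
  have hanti := antitone_setIntegral_Ioc hinv (hμ_supp.mono fun α hα => inv_nonneg.2 hα.1.le) 1
  have hq_int : IntegrableOn q (Ioc 0 1) := by
    rw [hq_eq, integrableOn_congr_set_ae Ioo_ae_eq_Ioc.symm]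
    exact integrableOn_quantile
      ((integrable_map_measure aestronglyMeasurable_id hZ.aemeasurable).2 hZ)
  refine ⟨hanti, ae_restrict_of_ae ((hanti.ae_continuousAt volume).mono
    fun _ h => h.continuousWithinAt), ?_, setIntegral_mul_setIntegral_Ioc_inv hq_int hint⟩
  rw [setIntegral_setIntegral_Ioc_inv hint, measureReal_def,
    (prob_compl_eq_zero_iff measurableSet_Ioc).1 hsupp, ENNReal.toReal_one]

/-- Kusuoka-type identity: for a probability measure μ on (0,1] and
φ(u) = ∫_{(u,1]} (1/α) μ(dα), the spectrum φ is non-increasing, left-continuous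
off a (Lebesgue) null set, integrates to 1, and
∫₀¹ F_Z⁻¹(u) φ(u) du = ∫₀¹ CVaR_α(Z) μ(dα). -/
theorem stmt1 {Ω : Type*} [MeasurableSpace Ω] (P : Measure Ω) [IsProbabilityMeasure P]
    (Z : Ω → ℝ) (hZm : Measurable Z) (hZ : Integrable Z P)
    (μ : Measure ℝ) [IsProbabilityMeasure μ] (hsupp : μ (Set.Ioc (0:ℝ) 1)ᶜ = 0)
    (hint : IntegrableOn (fun α : ℝ => α⁻¹) (Set.Ioc (0:ℝ) 1) μ)
    (φ : ℝ → ℝ) (hφ : ∀ u, φ u = ∫ α in Set.Ioc u 1, α⁻¹ ∂μ)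
    (q : ℝ → ℝ) (hq : ∀ u, q u = sInf {z | u ≤ (P {ω | Z ω ≤ z}).toReal})
    (cvar : ℝ → ℝ) (hcvar : ∀ α, cvar α = α⁻¹ * ∫ u in Set.Ioc (0:ℝ) α, q u) :
    Antitone φ
    ∧ (∀ᵐ u ∂(volume.restrict (Set.Ioc (0:ℝ) 1)), ContinuousWithinAt φ (Set.Iio u) u)
    ∧ (∫ u in Set.Ioc (0:ℝ) 1, φ u) = 1
    ∧ (∫ u in Set.Ioc (0:ℝ) 1, q u * φ u) = ∫ α in Set.Ioc (0:ℝ) 1, cvar α ∂μ :=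
  stmt1_general P Z hZ μ hsupp hint φ hφ q hq cvar hcvar
end

section
/- Let h be a fixed concave non-decreasing bounded function and define the value iteration V_{k+1}(x,s,c,a) = E[V_k(X', S', C', a*(X',S',C'))] where a* selects the action maximizing V_k, starting from V_0 corresponding to zero return. Then V_k(x,s,c,a) = max over Markov policies π of E[h(s + c·Σ_{t=0}^k γ^t R_t)], i.e., the k-th iterate equals the optimal k-step truncated risk-adjusted value. -/
open MeasureTheory

noncomputable section

private lemma abs_tsum_le_aux {ι : Type*} {f : ι → ℝ} (hf : Summable fun i => |f i|) :
    |∑' i, f i| ≤ ∑' i, |f i| := by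
  have := norm_tsum_le_tsum_norm (f := f) (by simpa [Real.norm_eq_abs] using hf)
  simpa [Real.norm_eq_abs] using this

private lemma abs_ciSup_le_aux {A : Type*} [Fintype A] [Nonempty A]
    (f : A → ℝ) (M : ℝ) (hf : ∀ a, |f a| ≤ M) : |⨆ a, f a| ≤ M := by
  have hbdd : BddAbove (Set.range f) := (Set.finite_range f).bddAbove
  rw [abs_le]
  constructor
  · calc -M ≤ f (Classical.arbitrary A) := (abs_le.1 (hf _)).1
      _ ≤ ⨆ a, f a := le_ciSup hbdd _
  · exact ciSup_le fun a => (abs_le.1 (hf a)).2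

/-- Lemma 2 of the paper: in the augmented MDP, the k-th iterate of the greedy
value iteration V_{k+1}(x,s,c,a) = E[sup_{a'} V_k(X',S',C',a')], started from
V_0 = h(s) (zero return), equals the optimal k-step truncated risk-adjusted value
sup over Markov policies π of E[h(s + c Σ_{t=0}^k γ^t R_t)]. -/
theorem stmt6 {X A : Type*} [Fintype X] [Fintype A] [Nonempty A]
    (p : X → A → PMF (ℝ × X)) (γ : ℝ) (hγ : γ ∈ Set.Ico (0:ℝ) 1)
    (h : ℝ → ℝ) (hconc : ConcaveOn ℝ Set.univ h) (hmono : Monotone h)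
    (hbdd : ∃ M, ∀ z, |h z| ≤ M)
    (V : ℕ → X → ℝ → ℝ → A → ℝ)
    (hV0 : ∀ x s c a, V 0 x s c a = h s)
    (hVrec : ∀ k x s c a, V (k + 1) x s c a =
      ∑' rx : ℝ × X, (p x a rx).toReal * ⨆ a' : A, V k rx.2 (s + c * rx.1) (γ * c) a')
    (J : ℕ → (X → ℝ → ℝ → A) → X → ℝ → ℝ → A → ℝ)
    (hJ0 : ∀ π x s c a, J 0 π x s c a = h s)
    (hJrec : ∀ k π x s c a, J (k + 1) π x s c a =
      ∑' rx : ℝ × X, (p x a rx).toReal *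
        J k π rx.2 (s + c * rx.1) (γ * c) (π rx.2 (s + c * rx.1) (γ * c)))
    (k : ℕ) (x : X) (s c : ℝ) (a : A) :
    V k x s c a = ⨆ π : X → ℝ → ℝ → A, J k π x s c a := by
  classical
  obtain ⟨M, hM⟩ := hbdd
  have hPne : Nonempty (X → ℝ → ℝ → A) := ⟨fun _ _ _ => Classical.arbitrary A⟩
  -- facts about the weights
  have hwnn : ∀ (x : X) (a : A) (rx : ℝ × X), (0:ℝ) ≤ ((p x a) rx).toReal :=
    fun _ _ _ => ENNReal.toReal_nonneg
  have hwsum : ∀ (x : X) (a : A), Summable (fun rx : ℝ × X => ((p x a) rx).toReal) := by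
    intro x a
    exact ENNReal.summable_toReal (by rw [(p x a).tsum_coe]; exact ENNReal.one_ne_top)
  have hwtsum : ∀ (x : X) (a : A), ∑' rx : ℝ × X, ((p x a) rx).toReal = 1 := by
    intro x a
    rw [← ENNReal.tsum_toReal_eq (fun rx => (p x a).apply_ne_top rx), (p x a).tsum_coe,
      ENNReal.toReal_one]
  -- summability of weighted bounded functions
  have hsummable : ∀ (x : X) (a : A) (f : ℝ × X → ℝ), (∀ rx, |f rx| ≤ M) →
      Summable (fun rx : ℝ × X => ((p x a) rx).toReal * f rx) := by
    intro x a f hf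
    apply Summable.of_abs
    apply Summable.of_nonneg_of_le (fun rx => abs_nonneg _) (fun rx => ?_)
      ((hwsum x a).mul_right M)
    rw [abs_mul, abs_of_nonneg (hwnn x a rx)]
    exact mul_le_mul_of_nonneg_left (hf rx) (hwnn x a rx)
  -- bounds on J and V
  have hJb : ∀ (k : ℕ) (π : X → ℝ → ℝ → A) (x : X) (s c : ℝ) (a : A),
      |J k π x s c a| ≤ M := by
    intro k
    induction k with
    | zero => intro π x s c a; rw [hJ0]; exact hM s
    | succ k ih =>
      intro π x s c a
      rw [hJrec]
      have hsum := hsummable x a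
        (fun rx => J k π rx.2 (s + c * rx.1) (γ * c) (π rx.2 (s + c * rx.1) (γ * c)))
        (fun rx => ih π rx.2 (s + c * rx.1) (γ * c) (π rx.2 (s + c * rx.1) (γ * c)))
      calc |∑' rx : ℝ × X, ((p x a) rx).toReal *
              J k π rx.2 (s + c * rx.1) (γ * c) (π rx.2 (s + c * rx.1) (γ * c))|
          ≤ ∑' rx : ℝ × X, |((p x a) rx).toReal *
              J k π rx.2 (s + c * rx.1) (γ * c) (π rx.2 (s + c * rx.1) (γ * c))| :=
            abs_tsum_le_aux hsum.abs
        _ ≤ ∑' rx : ℝ × X, ((p x a) rx).toReal * M := by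
            refine Summable.tsum_le_tsum (fun rx => ?_) hsum.abs ((hwsum x a).mul_right M)
            rw [abs_mul, abs_of_nonneg (hwnn x a rx)]
            exact mul_le_mul_of_nonneg_left (ih π rx.2 _ _ _) (hwnn x a rx)
        _ = M := by rw [tsum_mul_right, hwtsum, one_mul]
  have hVb : ∀ (k : ℕ) (x : X) (s c : ℝ) (a : A), |V k x s c a| ≤ M := by
    intro k
    induction k with
    | zero => intro x s c a; rw [hV0]; exact hM s
    | succ k ih =>
      intro x s c a
      rw [hVrec]
      have hb : ∀ rx : ℝ × X, |⨆ a' : A, V k rx.2 (s + c * rx.1) (γ * c) a'| ≤ M :=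
        fun rx => abs_ciSup_le_aux _ M (fun a' => ih rx.2 _ _ a')
      have hsum := hsummable x a
        (fun rx => ⨆ a' : A, V k rx.2 (s + c * rx.1) (γ * c) a') hb
      calc |∑' rx : ℝ × X, ((p x a) rx).toReal *
              ⨆ a' : A, V k rx.2 (s + c * rx.1) (γ * c) a'|
          ≤ ∑' rx : ℝ × X, |((p x a) rx).toReal *
              ⨆ a' : A, V k rx.2 (s + c * rx.1) (γ * c) a'| :=
            abs_tsum_le_aux hsum.abs
        _ ≤ ∑' rx : ℝ × X, ((p x a) rx).toReal * M := by
            refine Summable.tsum_le_tsum (fun rx => ?_) hsum.abs ((hwsum x a).mul_right M)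
            rw [abs_mul, abs_of_nonneg (hwnn x a rx)]
            exact mul_le_mul_of_nonneg_left (hb rx) (hwnn x a rx)
        _ = M := by rw [tsum_mul_right, hwtsum, one_mul]
  -- easy direction: J ≤ V
  have hJleV : ∀ (k : ℕ) (π : X → ℝ → ℝ → A) (x : X) (s c : ℝ) (a : A),
      J k π x s c a ≤ V k x s c a := by
    intro k
    induction k with
    | zero => intro π x s c a; rw [hJ0, hV0]
    | succ k ih =>
      intro π x s c a
      rw [hJrec, hVrec]
      refine Summable.tsum_le_tsum (fun rx => ?_)
        (hsummable x a
          (fun rx => J k π rx.2 (s + c * rx.1) (γ * c) (π rx.2 (s + c * rx.1) (γ * c)))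
          (fun rx => hJb k π rx.2 (s + c * rx.1) (γ * c) (π rx.2 (s + c * rx.1) (γ * c))))
        (hsummable x a
          (fun rx => ⨆ a' : A, V k rx.2 (s + c * rx.1) (γ * c) a')
          (fun rx => abs_ciSup_le_aux _ M (fun a' => hVb k rx.2 (s + c * rx.1) (γ * c) a')))
      refine mul_le_mul_of_nonneg_left ?_ (hwnn x a rx)
      calc J k π rx.2 (s + c * rx.1) (γ * c) (π rx.2 (s + c * rx.1) (γ * c))
          ≤ V k rx.2 (s + c * rx.1) (γ * c) (π rx.2 (s + c * rx.1) (γ * c)) := ih π _ _ _ _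
        _ ≤ ⨆ a' : A, V k rx.2 (s + c * rx.1) (γ * c) a' :=
            le_ciSup (Set.finite_range _).bddAbove _
  -- c = 0 degenerate lemmas
  have hVzero : ∀ (k : ℕ) (x : X) (s : ℝ) (a : A), V k x s 0 a = h s := by
    intro k
    induction k with
    | zero => intro x s a; rw [hV0]
    | succ k ih =>
      intro x s a
      rw [hVrec]
      have : ∀ rx : ℝ × X, ((p x a) rx).toReal *
          (⨆ a' : A, V k rx.2 (s + 0 * rx.1) (γ * 0) a') = ((p x a) rx).toReal * h s := by
        intro rx
        congr 1
        rw [iSup_congr (fun a' => by rw [zero_mul, add_zero, mul_zero, ih rx.2 s a'])]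
        exact ciSup_const
      rw [tsum_congr this, tsum_mul_right, hwtsum, one_mul]
  have hJzero : ∀ (k : ℕ) (π : X → ℝ → ℝ → A) (x : X) (s : ℝ) (a : A),
      J k π x s 0 a = h s := by
    intro k
    induction k with
    | zero => intro π x s a; rw [hJ0]
    | succ k ih =>
      intro π x s a
      rw [hJrec]
      have : ∀ rx : ℝ × X, ((p x a) rx).toReal *
          J k π rx.2 (s + 0 * rx.1) (γ * 0) (π rx.2 (s + 0 * rx.1) (γ * 0)) =
          ((p x a) rx).toReal * h s := by
        intro rx
        congr 1
        rw [zero_mul, add_zero, mul_zero, ih π rx.2 s _]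
      rw [tsum_congr this, tsum_mul_right, hwtsum, one_mul]
  -- a sufficient condition to finish
  have finish : (∃ π0 : X → ℝ → ℝ → A, J k π0 x s c a = V k x s c a) →
      V k x s c a = ⨆ π : X → ℝ → ℝ → A, J k π x s c a := by
    rintro ⟨π0, hπ0⟩
    refine le_antisymm ?_ (ciSup_le fun π => hJleV k π x s c a)
    rw [← hπ0]
    exact le_ciSup ⟨V k x s c a, by rintro _ ⟨π, rfl⟩; exact hJleV k π x s c a⟩ π0
  rcases eq_or_ne c 0 with hc | hc
  · subst hc
    apply finish
    exact ⟨Classical.arbitrary _, by rw [hJzero, hVzero]⟩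
  rcases eq_or_lt_of_le hγ.1 with hγ0 | hγpos
  · -- γ = 0
    apply finish
    refine ⟨Classical.arbitrary _, ?_⟩
    cases k with
    | zero => rw [hJ0, hV0]
    | succ k =>
      rw [hJrec, hVrec]
      refine tsum_congr fun rx => ?_
      congr 1
      rw [← hγ0, zero_mul]
      rw [hJzero, iSup_congr (fun a' => hVzero k rx.2 (s + c * rx.1) a')]
      exact ciSup_const.symm
  · -- 0 < γ < 1
    have hγ1 : γ < 1 := hγ.2
    have hpowinj : Function.Injective (fun t : ℕ => γ ^ t) :=
      (pow_right_strictAnti₀ hγpos hγ1).injective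
    -- optimal action selector
    obtain ⟨F, hF⟩ : ∃ F : ℕ → X → ℝ → ℝ → A, ∀ (j : ℕ) (x' : X) (s' c' : ℝ),
        V j x' s' c' (F j x' s' c') = ⨆ a' : A, V j x' s' c' a' := by
      choose F hF using fun (j : ℕ) (x' : X) (s' c' : ℝ) =>
        exists_eq_ciSup_of_finite (f := fun a' : A => V j x' s' c' a')
      exact ⟨F, hF⟩
    -- horizon decoder from the cost component
    set H : ℝ → ℕ := fun c' =>
      if hc' : ∃ t, t ∈ Finset.Icc 1 k ∧ c' = γ ^ t * c then hc'.choose else 0 with hHdef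
    have hH : ∀ t, t ∈ Finset.Icc 1 k → H (γ ^ t * c) = t := by
      intro t ht
      have hex : ∃ u, u ∈ Finset.Icc 1 k ∧ γ ^ t * c = γ ^ u * c := ⟨t, ht, rfl⟩
      rw [hHdef]
      simp only
      rw [dif_pos hex]
      obtain ⟨hu1, hu2⟩ := hex.choose_spec
      exact (hpowinj (mul_right_cancel₀ hc hu2)).symm
    set π0 : X → ℝ → ℝ → A := fun x' s' c' => F (k - H c') x' s' c' with hπ0def
    have key : ∀ j, j ≤ k → ∀ (x' : X) (s' : ℝ) (a' : A),
        J j π0 x' s' (γ ^ (k - j) * c) a' = V j x' s' (γ ^ (k - j) * c) a' := by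
      intro j
      induction j with
      | zero => intro _ x' s' a'; rw [hJ0, hV0]
      | succ j ih =>
        intro hjk x' s' a'
        rw [hJrec, hVrec]
        refine tsum_congr fun rx => ?_
        congr 1
        have hC : γ * (γ ^ (k - (j + 1)) * c) = γ ^ (k - j) * c := by
          rw [← mul_assoc, ← pow_succ']
          congr 2
          omega
        rw [hC, ih (by omega)]
        have hmem : k - j ∈ Finset.Icc 1 k := by
          simp only [Finset.mem_Icc]
          omega
        have hπ0eval : π0 rx.2 (s' + γ ^ (k - (j + 1)) * c * rx.1) (γ ^ (k - j) * c) =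
            F j rx.2 (s' + γ ^ (k - (j + 1)) * c * rx.1) (γ ^ (k - j) * c) := by
          rw [hπ0def]
          simp only
          rw [hH _ hmem]
          congr 1
          omega
        rw [hπ0eval, hF]
    apply finish
    refine ⟨π0, ?_⟩
    have := key k le_rfl x s a
    rwa [Nat.sub_self, pow_zero, one_mul] at this

end
end

section
/- With V_k as in the truncated optimal value iteration for a φ(0)-Lipschitz non-decreasing h and rewards in [R_MIN, R_MAX] with R_MIN ≥ 0, for every augmented state-action (x,s,c,a): V*(x,s,c,a) − φ(0)·c·γ^{k+1}·G_MAX ≤ V_k(x,s,c,a) ≤ V*(x,s,c,a), where V* = max over Markov policies of E[h(s + c·G^π)] and G_MAX = R_MAX/(1−γ). Moreover V_k increases monotonically in k to V*. -/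
/-
Since the rewards are nonnegative and bounded by `R_MAX`, the discounted return `G` exceeds its
truncation `G_{0:k}` by at most `γ^{k+1} G_MAX`. As `h` is non-decreasing and `φ(0)`-Lipschitz,
`0 ≤ h(s + c G) - h(s + c G_{0:k}) ≤ φ(0) c γ^{k+1} G_MAX` pointwise, hence for the expected
utility of every policy. An error bound that is uniform in the policy passes to the suprema, and
it tends to `0` with `k`.
-/

open MeasureTheory Filter Topology Set

section DiscountedSum

variable {γ M : ℝ} {r : ℕ → ℝ}

lemma summable_discounted (hγ0 : 0 ≤ γ) (hγ1 : γ < 1) (hr : ∀ t, r t ∈ Icc 0 M) :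
    Summable fun t => γ ^ t * r t :=
  ((summable_geometric_of_lt_one hγ0 hγ1).mul_right M).of_nonneg_of_le
    (fun t => mul_nonneg (pow_nonneg hγ0 t) (hr t).1)
    (fun t => mul_le_mul_of_nonneg_left (hr t).2 (pow_nonneg hγ0 t))

lemma sum_range_discounted_nonneg (hγ0 : 0 ≤ γ) (hr : ∀ t, r t ∈ Icc 0 M) (n : ℕ) :
    0 ≤ ∑ t ∈ Finset.range n, γ ^ t * r t :=
  Finset.sum_nonneg fun t _ => mul_nonneg (pow_nonneg hγ0 t) (hr t).1

lemma monotone_sum_range_discounted (hγ0 : 0 ≤ γ) (hr : ∀ t, r t ∈ Icc 0 M) :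
    Monotone fun n => ∑ t ∈ Finset.range n, γ ^ t * r t := fun _ _ hmn =>
  Finset.sum_le_sum_of_subset_of_nonneg (Finset.range_subset_range.2 hmn)
    fun t _ _ => mul_nonneg (pow_nonneg hγ0 t) (hr t).1

lemma sum_range_discounted_le_tsum (hγ0 : 0 ≤ γ) (hγ1 : γ < 1) (hr : ∀ t, r t ∈ Icc 0 M)
    (n : ℕ) : ∑ t ∈ Finset.range n, γ ^ t * r t ≤ ∑' t, γ ^ t * r t :=
  (summable_discounted hγ0 hγ1 hr).sum_le_tsum _ fun t _ => mul_nonneg (pow_nonneg hγ0 t) (hr t).1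

lemma tsum_discounted_le (hγ0 : 0 ≤ γ) (hγ1 : γ < 1) (hr : ∀ t, r t ∈ Icc 0 M) :
    ∑' t, γ ^ t * r t ≤ M / (1 - γ) := by
  have hgeom := (summable_geometric_of_lt_one hγ0 hγ1).mul_right M
  calc ∑' t, γ ^ t * r t ≤ ∑' t, γ ^ t * M :=
        (summable_discounted hγ0 hγ1 hr).tsum_le_tsum
          (fun t => mul_le_mul_of_nonneg_left (hr t).2 (pow_nonneg hγ0 t)) hgeom
    _ = M / (1 - γ) := by
        rw [tsum_mul_right, tsum_geometric_of_lt_one hγ0 hγ1, div_eq_mul_inv, mul_comm]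

lemma tsum_discounted_sub_sum_range_le (hγ0 : 0 ≤ γ) (hγ1 : γ < 1) (hr : ∀ t, r t ∈ Icc 0 M)
    (n : ℕ) :
    ∑' t, γ ^ t * r t - ∑ t ∈ Finset.range n, γ ^ t * r t ≤ γ ^ n * (M / (1 - γ)) := by
  rw [← (summable_discounted hγ0 hγ1 hr).sum_add_tsum_nat_add n, add_sub_cancel_left]
  calc ∑' t, γ ^ (t + n) * r (t + n) = γ ^ n * ∑' t, γ ^ t * r (t + n) := by
        rw [← tsum_mul_left]
        simp only [pow_add, mul_comm, mul_left_comm]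
    _ ≤ γ ^ n * (M / (1 - γ)) :=
        mul_le_mul_of_nonneg_left (tsum_discounted_le hγ0 hγ1 fun t => hr (t + n))
          (pow_nonneg hγ0 n)

end DiscountedSum

section Suprema

variable {ι : Type*} {A : ℕ → ι → ℝ} {B : ι → ℝ} {δ : ℕ → ℝ}

lemma sub_le_ciSup_of_le_add [Nonempty ι] (hB : BddAbove (range B)) (hAB : ∀ n i, A n i ≤ B i)
    (hBA : ∀ n i, B i ≤ A n i + δ n) (n : ℕ) : (⨆ i, B i) - δ n ≤ ⨆ i, A n i :=
  sub_le_iff_le_add.2 <| ciSup_le fun i =>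
    (hBA n i).trans (add_le_add_left (le_ciSup (hB.range_mono _ (hAB n)) i) _)

lemma monotone_ciSup_of_le (hB : BddAbove (range B)) (hAB : ∀ n i, A n i ≤ B i)
    (hA : ∀ i, Monotone fun n => A n i) : Monotone fun n => ⨆ i, A n i :=
  fun _ n hmn => ciSup_mono (hB.range_mono _ (hAB n)) fun i => hA i hmn

lemma tendsto_ciSup_of_le_add [Nonempty ι] (hB : BddAbove (range B))
    (hAB : ∀ n i, A n i ≤ B i) (hBA : ∀ n i, B i ≤ A n i + δ n)
    (hδ : Tendsto δ atTop (𝓝 0)) : Tendsto (fun n => ⨆ i, A n i) atTop (𝓝 (⨆ i, B i)) :=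
  tendsto_of_tendsto_of_tendsto_of_le_of_le (by simpa using tendsto_const_nhds.sub hδ)
    tendsto_const_nhds (sub_le_ciSup_of_le_add hB hAB hBA) fun n => ciSup_mono hB (hAB n)

end Suprema

section ExpectedUtility

variable {Ω : Type*} [MeasurableSpace Ω] {P : Measure Ω} [IsProbabilityMeasure P] {h : ℝ → ℝ}
  {s c : ℝ}

lemma integrable_comp_add_mul (hmono : Monotone h) (hc : 0 ≤ c) {X : Ω → ℝ} (hX : Measurable X)
    {G : ℝ} (hXG : ∀ ω, X ω ∈ Icc 0 G) : Integrable (fun ω => h (s + c * X ω)) P :=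
  Integrable.of_mem_Icc (h s) (h (s + c * G))
    (hmono.measurable.comp (measurable_const.add (hX.const_mul c))).aemeasurable
    (ae_of_all _ fun ω => ⟨hmono (le_add_of_nonneg_right (mul_nonneg hc (hXG ω).1)),
      hmono (by gcongr s + c * ?_; exact (hXG ω).2)⟩)

lemma integral_comp_le_add_of_abs_sub_le {K : NNReal} (hlip : LipschitzWith K h) {X Y : Ω → ℝ}
    (hX : Integrable (fun ω => h (X ω)) P) (hY : Integrable (fun ω => h (Y ω)) P) {ε : ℝ}
    (hXY : ∀ ω, |X ω - Y ω| ≤ ε) : ∫ ω, h (X ω) ∂P ≤ ∫ ω, h (Y ω) ∂P + K * ε := by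
  have hpt : ∀ ω, h (X ω) ≤ h (Y ω) + K * ε := fun ω => by
    have := hlip.dist_le_mul (X ω) (Y ω)
    rw [Real.dist_eq, Real.dist_eq] at this
    linarith [le_abs_self (h (X ω) - h (Y ω)), mul_le_mul_of_nonneg_left (hXY ω) K.coe_nonneg]
  calc ∫ ω, h (X ω) ∂P ≤ ∫ ω, (h (Y ω) + K * ε) ∂P :=
        integral_mono hX (hY.add (integrable_const _)) hpt
    _ = ∫ ω, h (Y ω) ∂P + K * ε := by
        rw [integral_add hY (integrable_const _), integral_const, probReal_univ, one_smul]

variable {γ M : ℝ} {r : ℕ → Ω → ℝ}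

lemma integrable_utility_sum_range (hr_meas : ∀ t, Measurable (r t))
    (hr : ∀ t ω, r t ω ∈ Icc 0 M) (hγ0 : 0 ≤ γ) (hγ1 : γ < 1) (hc : 0 ≤ c) (hmono : Monotone h)
    (n : ℕ) : Integrable (fun ω => h (s + c * ∑ t ∈ Finset.range n, γ ^ t * r t ω)) P :=
  integrable_comp_add_mul hmono hc (by fun_prop) fun ω =>
    ⟨sum_range_discounted_nonneg hγ0 (hr · ω) n,
      (sum_range_discounted_le_tsum hγ0 hγ1 (hr · ω) n).trans (tsum_discounted_le hγ0 hγ1 (hr · ω))⟩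

lemma integrable_utility_tsum (hr_meas : ∀ t, Measurable (r t))
    (hr : ∀ t ω, r t ω ∈ Icc 0 M) (hγ0 : 0 ≤ γ) (hγ1 : γ < 1) (hc : 0 ≤ c) (hmono : Monotone h) :
    Integrable (fun ω => h (s + c * ∑' t, γ ^ t * r t ω)) P :=
  integrable_comp_add_mul hmono hc (Measurable.tsum fun t => (hr_meas t).const_mul _) fun ω =>
    ⟨tsum_nonneg fun t => mul_nonneg (pow_nonneg hγ0 t) (hr t ω).1,
      tsum_discounted_le hγ0 hγ1 (hr · ω)⟩

lemma integral_utility_sum_range_le_tsum (hr_meas : ∀ t, Measurable (r t))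
    (hr : ∀ t ω, r t ω ∈ Icc 0 M) (hγ0 : 0 ≤ γ) (hγ1 : γ < 1) (hc : 0 ≤ c) (hmono : Monotone h)
    (n : ℕ) :
    ∫ ω, h (s + c * ∑ t ∈ Finset.range n, γ ^ t * r t ω) ∂P
      ≤ ∫ ω, h (s + c * ∑' t, γ ^ t * r t ω) ∂P :=
  integral_mono (integrable_utility_sum_range hr_meas hr hγ0 hγ1 hc hmono n)
    (integrable_utility_tsum hr_meas hr hγ0 hγ1 hc hmono) fun ω =>
      hmono (by gcongr s + c * ?_; exact sum_range_discounted_le_tsum hγ0 hγ1 (hr · ω) n)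

lemma monotone_integral_utility_sum_range (hr_meas : ∀ t, Measurable (r t))
    (hr : ∀ t ω, r t ω ∈ Icc 0 M) (hγ0 : 0 ≤ γ) (hγ1 : γ < 1) (hc : 0 ≤ c) (hmono : Monotone h) :
    Monotone fun n => ∫ ω, h (s + c * ∑ t ∈ Finset.range n, γ ^ t * r t ω) ∂P := fun m n hmn =>
  integral_mono (integrable_utility_sum_range hr_meas hr hγ0 hγ1 hc hmono m)
    (integrable_utility_sum_range hr_meas hr hγ0 hγ1 hc hmono n) fun ω =>
      hmono (by gcongr s + c * ?_; exact monotone_sum_range_discounted hγ0 (hr · ω) hmn)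

lemma integral_utility_tsum_le_sum_range_add {K : NNReal} (hr_meas : ∀ t, Measurable (r t))
    (hr : ∀ t ω, r t ω ∈ Icc 0 M) (hγ0 : 0 ≤ γ) (hγ1 : γ < 1) (hc : 0 ≤ c) (hmono : Monotone h)
    (hlip : LipschitzWith K h) (n : ℕ) :
    ∫ ω, h (s + c * ∑' t, γ ^ t * r t ω) ∂P
      ≤ ∫ ω, h (s + c * ∑ t ∈ Finset.range n, γ ^ t * r t ω) ∂P + K * c * γ ^ n * (M / (1 - γ)) := by
  simp only [mul_assoc]
  refine integral_comp_le_add_of_abs_sub_le hlip (integrable_utility_tsum hr_meas hr hγ0 hγ1 hc hmono)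
    (integrable_utility_sum_range hr_meas hr hγ0 hγ1 hc hmono n) fun ω => ?_
  rw [add_sub_add_left_eq_sub, ← mul_sub, abs_mul, abs_of_nonneg hc,
    abs_of_nonneg (sub_nonneg.2 (sum_range_discounted_le_tsum hγ0 hγ1 (hr · ω) n))]
  exact mul_le_mul_of_nonneg_left (tsum_discounted_sub_sum_range_le hγ0 hγ1 (hr · ω) n) hc

lemma integral_utility_tsum_le (hr_meas : ∀ t, Measurable (r t))
    (hr : ∀ t ω, r t ω ∈ Icc 0 M) (hγ0 : 0 ≤ γ) (hγ1 : γ < 1) (hc : 0 ≤ c) (hmono : Monotone h) :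
    ∫ ω, h (s + c * ∑' t, γ ^ t * r t ω) ∂P ≤ h (s + c * (M / (1 - γ))) := by
  calc ∫ ω, h (s + c * ∑' t, γ ^ t * r t ω) ∂P ≤ ∫ _, h (s + c * (M / (1 - γ))) ∂P :=
        integral_mono (integrable_utility_tsum hr_meas hr hγ0 hγ1 hc hmono) (integrable_const _)
          fun ω => hmono (by gcongr s + c * ?_; exact tsum_discounted_le hγ0 hγ1 (hr · ω))
    _ = h (s + c * (M / (1 - γ))) := by rw [integral_const, probReal_univ, one_smul]

end ExpectedUtility

theorem stmt7_general {Ω Pol : Type*} [MeasurableSpace Ω] (P : Measure Ω) [IsProbabilityMeasure P]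
    [Nonempty Pol]
    (R : Pol → ℕ → Ω → ℝ) (hmeas : ∀ π t, Measurable (R π t))
    (Rmin Rmax : ℝ) (hRmin : 0 ≤ Rmin)
    (hR : ∀ π t ω, R π t ω ∈ Set.Icc Rmin Rmax)
    (γ : ℝ) (hγ : γ ∈ Set.Ico (0:ℝ) 1)
    (φ0 : NNReal) (h : ℝ → ℝ)
    (hmono : Monotone h) (hlip : LipschitzWith φ0 h)
    (s c : ℝ) (hc : c ∈ Set.Ioc (0:ℝ) 1)
    (Vk : ℕ → ℝ)
    (hVk : ∀ k, Vk k = ⨆ π : Pol,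
      ∫ ω, h (s + c * ∑ t ∈ Finset.range (k + 1), γ ^ t * R π t ω) ∂P)
    (Vstar : ℝ)
    (hVs : Vstar = ⨆ π : Pol, ∫ ω, h (s + c * ∑' t, γ ^ t * R π t ω) ∂P)
    (Gmax : ℝ) (hG : Gmax = Rmax / (1 - γ)) (k : ℕ) :
    (Vstar - (φ0 : ℝ) * c * γ ^ (k + 1) * Gmax ≤ Vk k ∧ Vk k ≤ Vstar)
    ∧ Monotone Vk
    ∧ Filter.Tendsto Vk Filter.atTop (nhds Vstar) := by
  obtain ⟨hγ0, hγ1⟩ := hγ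
  have hc0 : 0 ≤ c := hc.1.le
  have hr : ∀ π t ω, R π t ω ∈ Icc 0 Rmax := fun π t ω => ⟨hRmin.trans (hR π t ω).1, (hR π t ω).2⟩
  obtain rfl : Vk = _ := funext hVk
  subst hVs hG
  have hAB := fun n π => integral_utility_sum_range_le_tsum (P := P) (s := s)
    (hmeas π) (hr π) hγ0 hγ1 hc0 hmono (n + 1)
  have hBA := fun n π => integral_utility_tsum_le_sum_range_add (P := P) (s := s)
    (hmeas π) (hr π) hγ0 hγ1 hc0 hmono hlip (n + 1)
  have hB : BddAbove (range fun π => ∫ ω, h (s + c * ∑' t, γ ^ t * R π t ω) ∂P) :=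
    ⟨_, forall_mem_range.2 fun π => integral_utility_tsum_le (hmeas π) (hr π) hγ0 hγ1 hc0 hmono⟩
  have hδ : Tendsto (fun n : ℕ => (φ0 : ℝ) * c * γ ^ (n + 1) * (Rmax / (1 - γ))) atTop (𝓝 0) := by
    simpa using (((tendsto_pow_atTop_nhds_zero_of_lt_one hγ0 hγ1).comp
      (tendsto_add_atTop_nat 1)).const_mul ((φ0 : ℝ) * c)).mul_const (Rmax / (1 - γ))
  refine ⟨⟨sub_le_ciSup_of_le_add hB hAB hBA k, ciSup_mono hB (hAB k)⟩,
    monotone_ciSup_of_le hB hAB fun π => ?_, tendsto_ciSup_of_le_add hB hAB hBA hδ⟩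
  exact (monotone_integral_utility_sum_range (hmeas π) (hr π) hγ0 hγ1 hc0 hmono).comp
    fun _ _ => Nat.succ_le_succ

/-- Lemma 3 of the paper: with V_k the optimal truncated risk-adjusted value
(sup over policies of E[h(s + c Σ_{t=0}^k γ^t R_t)]) and V* the optimal value
(sup over policies of E[h(s + c Σ_{t=0}^∞ γ^t R_t)]), for a non-decreasing,
concave, φ(0)-Lipschitz h and rewards in [R_MIN, R_MAX], R_MIN ≥ 0:
V* − φ(0)·c·γ^{k+1}·G_MAX ≤ V_k ≤ V*, and V_k increases monotonically to V*. -/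
theorem stmt7 {Ω Pol : Type*} [MeasurableSpace Ω] (P : Measure Ω) [IsProbabilityMeasure P]
    [Nonempty Pol]
    (R : Pol → ℕ → Ω → ℝ) (hmeas : ∀ π t, Measurable (R π t))
    (Rmin Rmax : ℝ) (hRmin : 0 ≤ Rmin)
    (hR : ∀ π t ω, R π t ω ∈ Set.Icc Rmin Rmax)
    (γ : ℝ) (hγ : γ ∈ Set.Ico (0:ℝ) 1)
    (φ0 : NNReal) (h : ℝ → ℝ)
    (hconc : ConcaveOn ℝ Set.univ h) (hmono : Monotone h) (hlip : LipschitzWith φ0 h)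
    (s c : ℝ) (hc : c ∈ Set.Ioc (0:ℝ) 1)
    (Vk : ℕ → ℝ)
    (hVk : ∀ k, Vk k = ⨆ π : Pol,
      ∫ ω, h (s + c * ∑ t ∈ Finset.range (k + 1), γ ^ t * R π t ω) ∂P)
    (Vstar : ℝ)
    (hVs : Vstar = ⨆ π : Pol, ∫ ω, h (s + c * ∑' t, γ ^ t * R π t ω) ∂P)
    (Gmax : ℝ) (hG : Gmax = Rmax / (1 - γ)) (k : ℕ) :
    (Vstar - (φ0 : ℝ) * c * γ ^ (k + 1) * Gmax ≤ Vk k ∧ Vk k ≤ Vstar)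
    ∧ Monotone Vk
    ∧ Filter.Tendsto Vk Filter.atTop (nhds Vstar) :=
  stmt7_general P R hmeas Rmin Rmax hRmin hR γ hγ φ0 h hmono hlip s c hc Vk hVk Vstar hVs Gmax hG k
end

section
/- With the atomic dual variable ξ^α as above and the decomposition G = s_t + c_t G_t given F_t, the conditional expectation satisfies α·ξ_t^α = F_{G_t}((λ_α − s_t)/c_t) − p_{G_t}((λ_α − s_t)/c_t)·(F_G(λ_α) − α)/p_G(λ_α), where p_{G_t}(z) is the conditional point mass of G_t at z. In particular, if the conditional CDF F_{G_t} is continuous at (λ_α − s_t)/c_t, then α·ξ_t^α = F_{G_t}((λ_α − s_t)/c_t). -/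
/-!
On `E` the affine relation `G = s + c · Gt` with `c > 0` turns the events `{G < λ}` and
`{G = λ}` into `{Gt < z}` and `{Gt = z}` with `z = (λ - s) / c`, so the integral of `ξ` over `E`
is `P({Gt < z} ∩ E) / α + P({Gt = z} ∩ E) · ξ(λ)`. Writing `P({Gt < z} ∩ E)` as
`P({Gt ≤ z} ∩ E) - P({Gt = z} ∩ E)` gives the formula; the correction term is the conditional
atom at `z` times `ξ(λ) - 1/α = -(F λ - α) / (α p)`.
-/

open MeasureTheory

lemma add_mul_lt_iff_lt_div_of_pos {s c x l : ℝ} (hc : 0 < c) :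
    s + c * x < l ↔ x < (l - s) / c := by
  rw [lt_div_iff₀ hc, mul_comm]
  constructor <;> intro h <;> linarith

lemma add_mul_eq_iff_eq_div {s c x l : ℝ} (hc : c ≠ 0) :
    s + c * x = l ↔ x = (l - s) / c := by
  rw [eq_div_iff hc, mul_comm]
  constructor <;> intro h <;> linarith

section StepFunction

variable {Ω : Type*} [MeasurableSpace Ω] (μ : Measure Ω) {X : Ω → ℝ} {E : Set Ω}

lemma measureReal_le_inter_eq_add [IsFiniteMeasure μ] (hX : Measurable X) (z : ℝ) :
    μ.real ({ω | X ω ≤ z} ∩ E)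
      = μ.real ({ω | X ω < z} ∩ E) + μ.real ({ω | X ω = z} ∩ E) := by
  rw [← measureReal_inter_add_sdiff (s := {ω | X ω ≤ z} ∩ E)
    (t := {ω | X ω < z}) (hX measurableSet_Iio)]
  congr 2 <;> ext ω <;> simp only [Set.mem_inter_iff, Set.mem_sdiff, Set.mem_ofPred_eq] <;> grind

lemma setIntegral_ite_lt_ite_eq [IsFiniteMeasure μ] (hX : Measurable X) (z a b : ℝ) :
    ∫ ω in E, (if X ω < z then a else if X ω = z then b else 0) ∂μ
      = μ.real ({ω | X ω < z} ∩ E) * a + μ.real ({ω | X ω = z} ∩ E) * b := by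
  have hlt : MeasurableSet {ω | X ω < z} := hX measurableSet_Iio
  have heq : MeasurableSet {ω | X ω = z} := hX (measurableSet_singleton z)
  have hstep : (fun ω => if X ω < z then a else if X ω = z then b else 0)
      = fun ω => {ω | X ω < z}.indicator (fun _ => a) ω
          + {ω | X ω = z}.indicator (fun _ => b) ω := by
    funext ω
    by_cases h : X ω < z
    · simp [h, h.ne]
    · by_cases h' : X ω = z <;> simp [h, h']
  rw [hstep, integral_add ((integrable_const a).indicator hlt).restrict
      ((integrable_const b).indicator heq).restrict,
    setIntegral_indicator hlt, setIntegral_indicator heq, setIntegral_const, setIntegral_const,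
    Set.inter_comm E, Set.inter_comm E, smul_eq_mul, smul_eq_mul]

end StepFunction

theorem stmt14_general {Ω : Type*} [MeasurableSpace Ω] (P : Measure Ω) [IsProbabilityMeasure P]
    (G Gt : Ω → ℝ) (hGtm : Measurable Gt)
    (α : ℝ) (hα : α ∈ Set.Ioo (0:ℝ) 1)
    (E : Set Ω) (hE : MeasurableSet E)
    (s c : ℝ) (hc : 0 < c)
    (hdecomp : ∀ ω ∈ E, G ω = s + c * Gt ω)
    (F : ℝ → ℝ)
    (lam : ℝ)
    (p : ℝ) (hppos : 0 < p)
    (ξ : Ω → ℝ)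
    (hξ : ∀ ω, ξ ω = if G ω < lam then α⁻¹
      else if G ω = lam then (1 - (F lam - p) / α) / p else 0)
    (ξt : ℝ) (hξt : ξt = (∫ ω in E, ξ ω ∂P) / (P E).toReal)
    (Ft pt : ℝ → ℝ)
    (hFt : ∀ z, Ft z = (P ({ω | Gt ω ≤ z} ∩ E)).toReal / (P E).toReal)
    (hpt : ∀ z, pt z = (P ({ω | Gt ω = z} ∩ E)).toReal / (P E).toReal) :
    α * ξt = Ft ((lam - s) / c) - pt ((lam - s) / c) * (F lam - α) / p
    ∧ (pt ((lam - s) / c) = 0 → α * ξt = Ft ((lam - s) / c)) := by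
  set z := (lam - s) / c
  have hξE : ∀ ω ∈ E, ξ ω = if Gt ω < z then α⁻¹
      else if Gt ω = z then (1 - (F lam - p) / α) / p else 0 := by
    intro ω hω
    simp only [hξ, hdecomp ω hω, add_mul_lt_iff_lt_div_of_pos hc,
      add_mul_eq_iff_eq_div hc.ne', z]
  have key : α * ξt = Ft z - pt z * (F lam - α) / p := by
    rw [hξt, setIntegral_congr_fun hE hξE, setIntegral_ite_lt_ite_eq P hGtm, hFt, hpt]
    simp only [← measureReal_def]
    rw [measureReal_le_inter_eq_add P hGtm]
    field_simp [hα.1.ne', hppos.ne']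
    ring
  exact ⟨key, fun hpt0 => by rw [key, hpt0]; ring⟩

/-- Conditional expectation of the atomic CVaR dual variable, on a conditioning
event E ∈ F_t with G = s + c·G_t on E:
α·ξ_t^α = F_{G_t|E}((λ_α−s)/c) − p_{G_t|E}((λ_α−s)/c)·(F_G(λ_α) − α)/p_G(λ_α),
and if the conditional CDF has no atom at (λ_α−s)/c then
α·ξ_t^α = F_{G_t|E}((λ_α−s)/c). -/
theorem stmt14 {Ω : Type*} [MeasurableSpace Ω] (P : Measure Ω) [IsProbabilityMeasure P]
    (G Gt : Ω → ℝ) (hGm : Measurable G) (hGtm : Measurable Gt) (hG : Integrable G P)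
    (α : ℝ) (hα : α ∈ Set.Ioo (0:ℝ) 1)
    (E : Set Ω) (hE : MeasurableSet E) (hEpos : 0 < (P E).toReal)
    (s c : ℝ) (hc : 0 < c)
    (hdecomp : ∀ ω ∈ E, G ω = s + c * Gt ω)
    (F : ℝ → ℝ) (hF : ∀ z, F z = (P {ω | G ω ≤ z}).toReal)
    (lam : ℝ) (hlam : lam = sInf {z | α ≤ F z})
    (p : ℝ) (hp : p = (P {ω | G ω = lam}).toReal) (hppos : 0 < p)
    (hα1 : F lam - p ≤ α) (hα2 : α ≤ F lam)
    (ξ : Ω → ℝ)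
    (hξ : ∀ ω, ξ ω = if G ω < lam then α⁻¹
      else if G ω = lam then (1 - (F lam - p) / α) / p else 0)
    (ξt : ℝ) (hξt : ξt = (∫ ω in E, ξ ω ∂P) / (P E).toReal)
    (Ft pt : ℝ → ℝ)
    (hFt : ∀ z, Ft z = (P ({ω | Gt ω ≤ z} ∩ E)).toReal / (P E).toReal)
    (hpt : ∀ z, pt z = (P ({ω | Gt ω = z} ∩ E)).toReal / (P E).toReal) :
    α * ξt = Ft ((lam - s) / c) - pt ((lam - s) / c) * (F lam - α) / p
    ∧ (pt ((lam - s) / c) = 0 → α * ξt = Ft ((lam - s) / c)) :=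
  stmt14_general P G Gt hGtm α hα E hE s c hc hdecomp F lam p hppos ξ hξ ξt hξt Ft pt hFt hpt
end
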